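/- arXiv:2012.13142 — 2 statements merged into one kernel-verified Lean document; each statement's English description precedes it below -/
import Mathlib

section
/- Lefschetz decomposition into primitive parts: under the stated hypotheses, for every integer a ≥ 0 the map N^s restricted to P^{−a−2s} is injective for every s ≥ 0, and H^{−a} is the internal direct sum H^{−a} = ⊕_{s ≥ 0} N^s(P^{−a−2s}). -/
namespace LefschetzDecomposition

variable (H : ℤ → Type) [∀ a, AddCommGroup (H a)] [∀ a, Module ℚ (H a)]

/-- Transport along an equality of indices. -/
def hcast {a b : ℤ} (h : a = b) : H a ≃ₗ[ℚ] H b := by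
  subst h; exact LinearEquiv.refl ℚ (H a)

variable (N : ∀ a : ℤ, H a →ₗ[ℚ] H (a + 2))

/-- The `n`-fold composite `N^n : H^a → H^{a + 2n}`. -/
noncomputable def Npow : (n : ℕ) → (a : ℤ) → (H a →ₗ[ℚ] H (a + 2 * n))
  | 0, a => (hcast H (by push_cast; ring)).toLinearMap
  | n + 1, a =>
      (hcast H (show a + 2 + 2 * (n : ℕ) = a + 2 * ((n : ℕ) + 1) by push_cast; ring)).toLinearMap
        ∘ₗ Npow n (a + 2) ∘ₗ N a

/-- The `a`-fold composite `N^a : H^{-a} → H^a`. -/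
noncomputable def Niter (a : ℕ) : H (-(a : ℤ)) →ₗ[ℚ] H (a : ℤ) :=
  (hcast H (show -(a : ℤ) + 2 * (a : ℕ) = (a : ℤ) by push_cast; ring)).toLinearMap
    ∘ₗ Npow H N a (-(a : ℤ))

/-- The primitive part in (nonpositive) degree `m`: for `m = -a` with `a ≥ 0` this is
`P^{-a} = ker (N^{a+1} : H^{-a} → H^{a+2})`. -/
noncomputable def Pprim (m : ℤ) : Submodule ℚ (H m) :=
  LinearMap.ker (Npow H N (m.natAbs + 1) m)

/-- The map `N^s : H^{-a-2s} → H^{-a}`. -/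
noncomputable def Nshift (a s : ℕ) : H (-(a : ℤ) - 2 * s) →ₗ[ℚ] H (-(a : ℤ)) :=
  (hcast H (show -(a : ℤ) - 2 * s + 2 * (s : ℕ) = -(a : ℤ) by push_cast; ring)).toLinearMap
    ∘ₗ Npow H N s (-(a : ℤ) - 2 * s)

end LefschetzDecomposition

/-!
Hard Lefschetz gives, in every degree `-m ≤ 0`, a splitting `H^{-m} = P^{-m} ⊕ N H^{-m-2}` with
`N` injective on `H^{-m-2}`: an element `y` with `N^{m+1} (N y) = 0` satisfies `N^{m+2} y = 0`, and
`N^{m+1} x` is hit by `N^{m+2} : H^{-m-2} ≅ H^{m+2}`. Iterating the splitting downwards, which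
stops since `H` vanishes in low degrees, gives the decomposition.
-/

theorem iSupIndep_of_disjoint_iSup_succ {α : Type*} [CompleteLattice α] [IsModularLattice α]
    {f : ℕ → α} (h0 : Disjoint (f 0) (⨆ s, f (s + 1)))
    (hsucc : iSupIndep fun s => f (s + 1)) : iSupIndep f := by
  rintro (_ | s)
  · exact h0.mono_right (iSup₂_le fun j hj => by
      obtain ⟨s, rfl⟩ := Nat.exists_eq_succ_of_ne_zero hj
      exact le_iSup (fun s => f (s + 1)) s)
  · have hle : ⨆ (j) (_ : j ≠ s + 1), f j ≤ f 0 ⊔ ⨆ (j) (_ : j ≠ s), f (j + 1) := by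
      refine iSup₂_le fun j hj => ?_
      rcases j with _ | j
      · exact le_sup_left
      · exact le_sup_of_le_right (le_iSup₂_of_le j (by omega) le_rfl)
    refine Disjoint.symm (Disjoint.mono_left hle ?_)
    refine (hsucc s).symm.disjoint_sup_left_of_disjoint_sup_right (h0.mono_right ?_)
    exact sup_le (iSup₂_le fun j _ => le_iSup (fun s => f (s + 1)) j)
      (le_iSup (fun s => f (s + 1)) s)

section Descent

variable {R W : Type*} [Ring R] [AddCommGroup W] [Module R W]
  {V : ℕ → Type*} [∀ k, AddCommGroup (V k)] [∀ k, Module R (V k)]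
  {φ : ∀ k, V (k + 1) →ₗ[R] V k} {f : ∀ s, V s →ₗ[R] W}

theorem injective_of_eq_comp_succ (hφ : ∀ k, Function.Injective (φ k))
    (hf : ∀ s, f (s + 1) = f s ∘ₗ φ s) (hf0 : Function.Injective (f 0)) :
    ∀ s, Function.Injective (f s)
  | 0 => hf0
  | s + 1 => by
    rw [hf]
    exact (injective_of_eq_comp_succ hφ hf hf0 s).comp (hφ s)

theorem iSupIndep_map_and_iSup_map_eq_range {Q : ∀ k, Submodule R (V k)}
    (hφ : ∀ k, Function.Injective (φ k)) (hQ : ∀ k, IsCompl (Q k) (LinearMap.range (φ k)))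
    (hf : ∀ s, f (s + 1) = f s ∘ₗ φ s) (hf0 : Function.Injective (f 0))
    (K : ℕ) (hK : ∀ k, K ≤ k → Subsingleton (V k)) :
    iSupIndep (fun s => (Q s).map (f s)) ∧ ⨆ s, (Q s).map (f s) = LinearMap.range (f 0) := by
  induction K generalizing V with
  | zero =>
    have hbot : ∀ s, (Q s).map (f s) = ⊥ := fun s => by
      have := hK s s.zero_le
      rw [Subsingleton.elim (Q s) ⊥, Submodule.map_bot]
    have := hK 0 le_rfl
    simp only [hbot, iSup_bot]
    exact ⟨fun _ => disjoint_bot_left,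
      (LinearMap.range_eq_bot.mpr (Subsingleton.elim _ _)).symm⟩
  | succ K ih =>
    obtain ⟨hindep, hsup⟩ := ih (V := fun k => V (k + 1)) (f := fun s => f (s + 1))
      (fun k => hφ (k + 1)) (fun k => hQ (k + 1)) (fun s => hf (s + 1))
      (by rw [hf]; exact hf0.comp (hφ 0)) (fun k hk => hK (k + 1) (by omega))
    have hrange : ⨆ s, (Q (s + 1)).map (f (s + 1)) = (LinearMap.range (φ 0)).map (f 0) := by
      rw [hsup, hf, LinearMap.range_comp]
    refine ⟨iSupIndep_of_disjoint_iSup_succ ?_ hindep, ?_⟩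
    · rw [hrange]
      exact Submodule.disjoint_map hf0 (hQ 0).disjoint
    · rw [← sup_iSup_nat_succ, hrange, ← Submodule.map_sup, (hQ 0).sup_eq_top,
        Submodule.map_top]

end Descent

namespace LefschetzDecomposition

variable {H : ℤ → Type} [∀ a, AddCommGroup (H a)] [∀ a, Module ℚ (H a)]
  {N : ∀ a : ℤ, H a →ₗ[ℚ] H (a + 2)}

variable (N) in
noncomputable def Nstep {b d : ℤ} (h : b + 2 = d) : H b →ₗ[ℚ] H d :=
  (hcast H h).toLinearMap ∘ₗ N b

theorem hcast_hcast {a b c : ℤ} (h₁ : a = b) (h₂ : b = c) (x : H a) :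
    hcast H h₂ (hcast H h₁ x) = hcast H (h₁.trans h₂) x := by
  subst h₁ h₂; rfl

theorem Npow_Nstep {b d : ℤ} (h : b + 2 = d) (n : ℕ) (y : H b) :
    Npow H N n d (Nstep N h y) = hcast H (by push_cast; omega) (Npow H N (n + 1) b y) := by
  subst h
  rw [Npow, LinearMap.comp_apply, LinearMap.comp_apply, LinearEquiv.coe_coe, hcast_hcast]
  rfl

theorem Npow_bijective (hHL : ∀ a : ℕ, Function.Bijective (Niter H N a)) {n : ℕ} {d : ℤ}
    (hd : d = -n) : Function.Bijective (Npow H N n d) := by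
  subst hd
  exact (Function.Bijective.of_comp_iff' (hcast H _).bijective _).mp (hHL n)

theorem Nstep_injective (hHL : ∀ a : ℕ, Function.Bijective (Niter H N a)) {b d : ℤ}
    (h : b + 2 = d) (hd : d ≤ 0) : Function.Injective (Nstep N h) := by
  obtain ⟨n, hb⟩ : ∃ n : ℕ, b = -(n + 1 : ℕ) := ⟨(-d).toNat + 1, by omega⟩
  have hN : Function.Injective (N b) :=
    Function.Injective.of_comp (f := hcast H _ ∘ Npow H N n (b + 2))
      (Npow_bijective hHL (n := n + 1) hb).injective
  exact (hcast H h).injective.comp hN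

theorem isCompl_Pprim_range_Nstep (hHL : ∀ a : ℕ, Function.Bijective (Niter H N a)) {b d : ℤ}
    (h : b + 2 = d) (hd : d ≤ 0) : IsCompl (Pprim H N d) (LinearMap.range (Nstep N h)) := by
  have hbij : Function.Bijective (Npow H N (d.natAbs + 1 + 1) b) :=
    Npow_bijective hHL (by omega)
  constructor
  · refine Submodule.disjoint_def.mpr fun x hx ⟨y, hy⟩ => ?_
    rw [Pprim, LinearMap.mem_ker, ← hy, Npow_Nstep, LinearEquiv.map_eq_zero_iff] at hx
    rw [← hy, (injective_iff_map_eq_zero _).mp hbij.injective y hx, map_zero]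
  · refine codisjoint_iff.mpr (eq_top_iff.mpr fun x _ => ?_)
    obtain ⟨y, hy⟩ :=
      hbij.surjective ((hcast H (by push_cast; omega)).symm (Npow H N (d.natAbs + 1) d x))
    have hprim : x - Nstep N h y ∈ Pprim H N d := by
      rw [Pprim, LinearMap.mem_ker, map_sub, Npow_Nstep, hy, LinearEquiv.apply_symm_apply, sub_self]
    simpa using Submodule.add_mem_sup hprim (LinearMap.mem_range_self (Nstep N h) y)

theorem Nshift_succ (a s : ℕ) :
    Nshift H N a (s + 1) = Nshift H N a s ∘ₗ Nstep N (by push_cast; ring) := by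
  ext x
  simp only [Nshift, LinearMap.comp_apply, Npow_Nstep, LinearEquiv.coe_coe, hcast_hcast]

theorem Nshift_zero_bijective (a : ℕ) : Function.Bijective (Nshift H N a 0) := by
  have : ⇑(Nshift H N a 0) = hcast H (by simp) := funext fun x => hcast_hcast _ _ x
  rw [this]
  exact (hcast H _).bijective

end LefschetzDecomposition

open LefschetzDecomposition in
theorem lefschetz_primitive_decomposition_general
    (H : ℤ → Type) [∀ a, AddCommGroup (H a)] [∀ a, Module ℚ (H a)]
    (hbdd : ∃ n : ℕ, ∀ a : ℤ, (n : ℤ) ≤ |a| → ∀ x : H a, x = 0)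
    (N : ∀ a : ℤ, H a →ₗ[ℚ] H (a + 2))
    (hHL : ∀ a : ℕ, Function.Bijective (Niter H N a)) :
    ∀ a : ℕ,
      (∀ s : ℕ, Set.InjOn (Nshift H N a s) (Pprim H N (-(a : ℤ) - 2 * s))) ∧
      DirectSum.IsInternal
        (fun s : ℕ => (Pprim H N (-(a : ℤ) - 2 * s)).map (Nshift H N a s)) := by
  intro a
  obtain ⟨n, hn⟩ := hbdd
  have hdeg (k : ℕ) : -(a : ℤ) - 2 * (k + 1 : ℕ) + 2 = -(a : ℤ) - 2 * k := by
    push_cast; ring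
  have hinj (k : ℕ) := Nstep_injective hHL (hdeg k) (by omega)
  have hcompl (k : ℕ) := isCompl_Pprim_range_Nstep hHL (hdeg k) (by omega)
  have hvanish : ∀ k, n ≤ k → Subsingleton (H (-(a : ℤ) - 2 * k)) := fun k hk =>
    ⟨fun x y => by
      have hk' : (n : ℤ) ≤ |-(a : ℤ) - 2 * k| := by rw [abs_of_nonpos (by omega)]; omega
      rw [hn _ hk' x, hn _ hk' y]⟩
  have hf0 := Nshift_zero_bijective (N := N) a
  obtain ⟨hindep, hsup⟩ := iSupIndep_map_and_iSup_map_eq_range hinj hcompl (Nshift_succ a)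
    hf0.injective n hvanish
  refine ⟨fun s => (injective_of_eq_comp_succ hinj (Nshift_succ a) hf0.injective s).injOn,
    (DirectSum.isInternal_submodule_iff_iSupIndep_and_iSup_eq_top _).mpr ⟨hindep, ?_⟩⟩
  rw [hsup, LinearMap.range_eq_top]
  exact hf0.surjective

open LefschetzDecomposition in
/-- **Lefschetz decomposition into primitive parts.**  Let `(H^a)` be a bounded family of
finite-dimensional `ℚ`-vector spaces with maps `N : H^a → H^{a+2}` satisfying hard Lefschetz
(`N^a : H^{-a} → H^a` is an isomorphism for every `a ≥ 0`).  Then for every `a ≥ 0`, the map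
`N^s` is injective on the primitive part `P^{-a-2s} = ker N^{a+2s+1}` for every `s ≥ 0`, and
`H^{-a}` is the internal direct sum `⊕_{s ≥ 0} N^s (P^{-a-2s})`. -/
theorem lefschetz_primitive_decomposition
    (H : ℤ → Type) [∀ a, AddCommGroup (H a)] [∀ a, Module ℚ (H a)]
    [∀ a, FiniteDimensional ℚ (H a)]
    (hbdd : ∃ n : ℕ, ∀ a : ℤ, (n : ℤ) ≤ |a| → ∀ x : H a, x = 0)
    (N : ∀ a : ℤ, H a →ₗ[ℚ] H (a + 2))
    (hHL : ∀ a : ℕ, Function.Bijective (Niter H N a)) :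
    ∀ a : ℕ,
      (∀ s : ℕ, Set.InjOn (Nshift H N a s) (Pprim H N (-(a : ℤ) - 2 * s))) ∧
      DirectSum.IsInternal
        (fun s : ℕ => (Pprim H N (-(a : ℤ) - 2 * s)).map (Nshift H N a s)) :=
  lefschetz_primitive_decomposition_general H hbdd N hHL
end

section
/- Duality between the kernels: under the stated hypotheses, ker(N_V) is ψ-orthogonal to im(M_W), ker(N_W) is ψ-orthogonal to im(M_V), and the restriction of ψ to ker(N_V) × ker(N_W) is a nondegenerate bilinear pairing. -/
namespace LinearMap

variable {R M M' N N' P : Type*} [CommRing R] [AddCommGroup M] [Module R M]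
  [AddCommGroup M'] [Module R M'] [AddCommGroup N] [Module R N]
  [AddCommGroup N'] [Module R N'] [AddCommGroup P] [Module R P]

theorem apply_eq_zero_of_mem_ker_of_mem_range {B : M →ₗ[R] N →ₗ[R] P}
    {B' : M' →ₗ[R] N' →ₗ[R] P} {f : M →ₗ[R] M'} {g : N' →ₗ[R] N}
    (hadj : ∀ x z, B' (f x) z = -B x (g z)) :
    ∀ x ∈ ker f, ∀ y ∈ range g, B x y = 0 := by
  rintro x hx _ ⟨z, rfl⟩
  rw [← neg_eq_zero, ← hadj, mem_ker.mp hx, map_zero, zero_apply]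

theorem SeparatingLeft.eq_zero_of_orthogonal_of_codisjoint {B : M →ₗ[R] N →ₗ[R] P}
    (hB : B.SeparatingLeft) {K : Submodule R M} {L L' : Submodule R N} (hL : Codisjoint L L')
    (hKL' : ∀ x ∈ K, ∀ y ∈ L', B x y = 0) :
    ∀ x ∈ K, (∀ y ∈ L, B x y = 0) → x = 0 := by
  intro x hx hxL
  refine hB x fun y ↦ ?_
  obtain ⟨l, l', hl, hl', rfl⟩ := Submodule.codisjoint_iff_exists_add_eq.mp hL y
  rw [map_add, hxL l hl, hKL' x hx l' hl', add_zero]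

end LinearMap

theorem kernel_duality_general
    (V V' V'' W W' W'' : Type)
    [AddCommGroup V] [Module ℚ V]
    [AddCommGroup V'] [Module ℚ V']
    [AddCommGroup V''] [Module ℚ V'']
    [AddCommGroup W] [Module ℚ W]
    [AddCommGroup W'] [Module ℚ W']
    [AddCommGroup W''] [Module ℚ W'']
    (ψ : V →ₗ[ℚ] W →ₗ[ℚ] ℚ) (ψ' : V' →ₗ[ℚ] W'' →ₗ[ℚ] ℚ) (ψ'' : V'' →ₗ[ℚ] W' →ₗ[ℚ] ℚ)
    (hψl : ∀ x : V, (∀ y : W, ψ x y = 0) → x = 0)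
    (hψr : ∀ y : W, (∀ x : V, ψ x y = 0) → y = 0)
    (NV : V →ₗ[ℚ] V') (MV : V'' →ₗ[ℚ] V) (NW : W →ₗ[ℚ] W') (MW : W'' →ₗ[ℚ] W)
    (hadj1 : ∀ (x : V'') (y : W), ψ (MV x) y = - ψ'' x (NW y))
    (hadj2 : ∀ (x : V) (z : W''), ψ' (NV x) z = - ψ x (MW z))
    (hdecV : IsCompl (LinearMap.ker NV) (LinearMap.range MV))
    (hdecW : IsCompl (LinearMap.ker NW) (LinearMap.range MW)) :
    (∀ x ∈ LinearMap.ker NV, ∀ y ∈ LinearMap.range MW, ψ x y = 0) ∧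
    (∀ y ∈ LinearMap.ker NW, ∀ x ∈ LinearMap.range MV, ψ x y = 0) ∧
    (∀ x ∈ LinearMap.ker NV, (∀ y ∈ LinearMap.ker NW, ψ x y = 0) → x = 0) ∧
    (∀ y ∈ LinearMap.ker NW, (∀ x ∈ LinearMap.ker NV, ψ x y = 0) → y = 0) := by
  have hV : ∀ x ∈ LinearMap.ker NV, ∀ y ∈ LinearMap.range MW, ψ x y = 0 :=
    LinearMap.apply_eq_zero_of_mem_ker_of_mem_range hadj2
  have hW : ∀ y ∈ LinearMap.ker NW, ∀ x ∈ LinearMap.range MV, ψ.flip y x = 0 :=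
    LinearMap.apply_eq_zero_of_mem_ker_of_mem_range (B' := ψ''.flip) fun y x ↦ by simp [hadj1]
  exact ⟨hV, hW,
    LinearMap.SeparatingLeft.eq_zero_of_orthogonal_of_codisjoint hψl hdecW.codisjoint hV,
    LinearMap.SeparatingLeft.eq_zero_of_orthogonal_of_codisjoint (B := ψ.flip) hψr
      hdecV.codisjoint hW⟩

/-- **Duality between the kernels.**  Let `V, V', V'', W, W', W''` be finite-dimensional
`ℚ`-vector spaces with nondegenerate bilinear pairings `ψ : V × W → ℚ`, `ψ' : V' × W'' → ℚ`,
`ψ'' : V'' × W' → ℚ`, and linear maps `N_V : V → V'`, `M_V : V'' → V`, `N_W : W → W'`,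
`M_W : W'' → W` satisfying the adjunction identities `ψ(M_V x, y) = -ψ''(x, N_W y)` and
`ψ'(N_V x, z) = -ψ(x, M_W z)`.  If `V = ker N_V ⊕ im M_V` and `W = ker N_W ⊕ im M_W`, then
`ker N_V` is `ψ`-orthogonal to `im M_W`, `ker N_W` is `ψ`-orthogonal to `im M_V`, and the
restriction of `ψ` to `ker N_V × ker N_W` is a nondegenerate pairing. -/
theorem kernel_duality
    (V V' V'' W W' W'' : Type)
    [AddCommGroup V] [Module ℚ V] [FiniteDimensional ℚ V]
    [AddCommGroup V'] [Module ℚ V'] [FiniteDimensional ℚ V']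
    [AddCommGroup V''] [Module ℚ V''] [FiniteDimensional ℚ V'']
    [AddCommGroup W] [Module ℚ W] [FiniteDimensional ℚ W]
    [AddCommGroup W'] [Module ℚ W'] [FiniteDimensional ℚ W']
    [AddCommGroup W''] [Module ℚ W''] [FiniteDimensional ℚ W'']
    (ψ : V →ₗ[ℚ] W →ₗ[ℚ] ℚ) (ψ' : V' →ₗ[ℚ] W'' →ₗ[ℚ] ℚ) (ψ'' : V'' →ₗ[ℚ] W' →ₗ[ℚ] ℚ)
    (hψl : ∀ x : V, (∀ y : W, ψ x y = 0) → x = 0)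
    (hψr : ∀ y : W, (∀ x : V, ψ x y = 0) → y = 0)
    (hψ'l : ∀ x : V', (∀ z : W'', ψ' x z = 0) → x = 0)
    (hψ'r : ∀ z : W'', (∀ x : V', ψ' x z = 0) → z = 0)
    (hψ''l : ∀ x : V'', (∀ y : W', ψ'' x y = 0) → x = 0)
    (hψ''r : ∀ y : W', (∀ x : V'', ψ'' x y = 0) → y = 0)
    (NV : V →ₗ[ℚ] V') (MV : V'' →ₗ[ℚ] V) (NW : W →ₗ[ℚ] W') (MW : W'' →ₗ[ℚ] W)
    (hadj1 : ∀ (x : V'') (y : W), ψ (MV x) y = - ψ'' x (NW y))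
    (hadj2 : ∀ (x : V) (z : W''), ψ' (NV x) z = - ψ x (MW z))
    (hdecV : IsCompl (LinearMap.ker NV) (LinearMap.range MV))
    (hdecW : IsCompl (LinearMap.ker NW) (LinearMap.range MW)) :
    (∀ x ∈ LinearMap.ker NV, ∀ y ∈ LinearMap.range MW, ψ x y = 0) ∧
    (∀ y ∈ LinearMap.ker NW, ∀ x ∈ LinearMap.range MV, ψ x y = 0) ∧
    (∀ x ∈ LinearMap.ker NV, (∀ y ∈ LinearMap.ker NW, ψ x y = 0) → x = 0) ∧
    (∀ y ∈ LinearMap.ker NW, (∀ x ∈ LinearMap.ker NV, ψ x y = 0) → y = 0) :=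
  kernel_duality_general V V' V'' W W' W'' ψ ψ' ψ'' hψl hψr NV MV NW MW hadj1 hadj2 hdecV hdecW
end
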